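/- arXiv:2408.09573 — 3 statements merged into one kernel-verified Lean document; each statement's English description precedes it below -/
import Mathlib

section
/- Let a > 0 and 0 < m < M < ∞. Then the constitutive map S is monotone on its domain: for all D₁, D₂ ∈ Sym3 with |D₁| < M and |D₂| < M, one has (S(D₁) − S(D₂)) · (D₁ − D₂) ≥ 0. -/
/-!
`S` is the radial map `x ↦ φ(|x|) x / |x|` with profile `φ(t) = (t - m)₊ (M^a - t^a)^(-1/a)`,
which is nonnegative and nondecreasing on `[0, M)`. For any such radial map on a real inner
product space, expanding and applying Cauchy–Schwarz `⟪x, y⟫ ≤ |x| |y|` gives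
`⟪S x - S y, x - y⟫ ≥ (φ |x| - φ |y|) (|x| - |y|) ≥ 0`. The Frobenius product is the Euclidean
inner product on `ℝ^(3×3)`, so this applies to `Smap`.
-/

noncomputable section

/-- Frobenius inner product on 3×3 real matrices: `A·B = Σ_{i,j} A_{ij} B_{ij}`. -/
def mdot (A B : Matrix (Fin 3) (Fin 3) ℝ) : ℝ := ∑ i, ∑ j, A i j * B i j

/-- Frobenius norm `|A| = (A·A)^{1/2}`. -/
def mnorm (A : Matrix (Fin 3) (Fin 3) ℝ) : ℝ := Real.sqrt (mdot A A)

/-- The constitutive map `S(D) = (|D|−m)_+ (M^a − |D|^a)^{−1/a} D/|D|`, with `S(0) = 0`. -/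
def Smap (a m M : ℝ) (D : Matrix (Fin 3) (Fin 3) ℝ) : Matrix (Fin 3) (Fin 3) ℝ :=
  ((max (mnorm D - m) 0) * (M ^ a - mnorm D ^ a) ^ (-1/a) / mnorm D) • D

open RealInnerProductSpace

section RadialMap

variable {E : Type*} [NormedAddCommGroup E] [InnerProductSpace ℝ E]

def radialMap (φ : ℝ → ℝ) (x : E) : E := (φ ‖x‖ / ‖x‖) • x

-- `φ t / t * t` is `φ t` for `t ≠ 0` but `0` at `t = 0` (division by zero); since `φ ≥ 0`,
-- this still gives a monotone function.
lemma monotoneOn_div_mul_self {φ : ℝ → ℝ} {I : Set ℝ} (hI : ∀ t ∈ I, 0 ≤ t)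
    (hφ : MonotoneOn φ I) (hφ₀ : ∀ t ∈ I, 0 ≤ φ t) :
    MonotoneOn (fun t => φ t / t * t) I := by
  intro t ht u hu htu
  rcases (hI t ht).eq_or_lt with rfl | htpos
  · simpa using mul_nonneg (div_nonneg (hφ₀ u hu) (hI u hu)) (hI u hu)
  · simp only [div_mul_cancel₀ _ htpos.ne', div_mul_cancel₀ _ (htpos.trans_le htu).ne']
    exact hφ ht hu htu

theorem inner_radialMap_sub_radialMap_nonneg {φ : ℝ → ℝ} {I : Set ℝ} (hI : ∀ t ∈ I, 0 ≤ t)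
    (hφ : MonotoneOn φ I) (hφ₀ : ∀ t ∈ I, 0 ≤ φ t) {x y : E} (hx : ‖x‖ ∈ I) (hy : ‖y‖ ∈ I) :
    0 ≤ ⟪radialMap φ x - radialMap φ y, x - y⟫ := by
  set g := φ ‖x‖ / ‖x‖
  set h := φ ‖y‖ / ‖y‖
  have hg : 0 ≤ g := div_nonneg (hφ₀ _ hx) (norm_nonneg x)
  have hh : 0 ≤ h := div_nonneg (hφ₀ _ hy) (norm_nonneg y)
  have expand : ⟪radialMap φ x - radialMap φ y, x - y⟫
      = g * ‖x‖ ^ 2 + h * ‖y‖ ^ 2 - (g + h) * ⟪x, y⟫ := by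
    simp only [radialMap, inner_sub_left, inner_sub_right, real_inner_smul_left,
      real_inner_self_eq_norm_sq, real_inner_comm x y]
    ring
  have cauchySchwarz : (g + h) * ⟪x, y⟫ ≤ (g + h) * (‖x‖ * ‖y‖) :=
    mul_le_mul_of_nonneg_left (real_inner_le_norm x y) (add_nonneg hg hh)
  have mono : 0 ≤ (g * ‖x‖ - h * ‖y‖) * (‖x‖ - ‖y‖) := by
    have hψ := monotoneOn_div_mul_self hI hφ hφ₀
    rcases le_total ‖x‖ ‖y‖ with hxy | hxy
    · exact mul_nonneg_of_nonpos_of_nonpos (sub_nonpos.2 (hψ hx hy hxy)) (sub_nonpos.2 hxy)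
    · exact mul_nonneg (sub_nonneg.2 (hψ hy hx hxy)) (sub_nonneg.2 hxy)
  rw [expand]
  nlinarith

end RadialMap

section FrobeniusVec

variable {m n : Type*}

def frobeniusVec (A : Matrix m n ℝ) : EuclideanSpace ℝ (m × n) :=
  WithLp.toLp 2 fun p => A p.1 p.2

lemma frobeniusVec_sub (A B : Matrix m n ℝ) :
    frobeniusVec (A - B) = frobeniusVec A - frobeniusVec B := rfl

lemma frobeniusVec_smul (c : ℝ) (A : Matrix m n ℝ) :
    frobeniusVec (c • A) = c • frobeniusVec A := rfl

end FrobeniusVec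

lemma mdot_eq_inner (A B : Matrix (Fin 3) (Fin 3) ℝ) :
    mdot A B = ⟪frobeniusVec A, frobeniusVec B⟫ := by
  simp [mdot, frobeniusVec, PiLp.inner_apply, Fintype.sum_prod_type, mul_comm]

lemma mnorm_eq_norm (A : Matrix (Fin 3) (Fin 3) ℝ) : mnorm A = ‖frobeniusVec A‖ := by
  rw [mnorm, mdot_eq_inner, norm_eq_sqrt_real_inner]

def Sprofile (a m M t : ℝ) : ℝ := max (t - m) 0 * (M ^ a - t ^ a) ^ (-1 / a)

lemma Sprofile_nonneg {a : ℝ} (ha : 0 < a) (m : ℝ) {M t : ℝ} (ht : t ∈ Set.Ico 0 M) :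
    0 ≤ Sprofile a m M t :=
  mul_nonneg (le_max_right _ _) <| Real.rpow_nonneg
    (sub_nonneg.2 (Real.rpow_lt_rpow ht.1 ht.2 ha).le) _

lemma Sprofile_monotoneOn {a : ℝ} (ha : 0 < a) (m M : ℝ) :
    MonotoneOn (Sprofile a m M) (Set.Ico 0 M) := by
  intro s hs t ht hst
  have hgap : 0 < M ^ a - t ^ a := sub_pos.2 (Real.rpow_lt_rpow ht.1 ht.2 ha)
  have hpow : s ^ a ≤ t ^ a := Real.rpow_le_rpow hs.1 hst ha.le
  refine mul_le_mul (max_le_max (by linarith) le_rfl) ?_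
    (Real.rpow_nonneg (by linarith) _) (le_max_right _ _)
  exact Real.rpow_le_rpow_of_nonpos hgap (by linarith)
    (div_nonpos_of_nonpos_of_nonneg (by norm_num) ha.le)

lemma frobeniusVec_Smap (a m M : ℝ) (D : Matrix (Fin 3) (Fin 3) ℝ) :
    frobeniusVec (Smap a m M D) = radialMap (Sprofile a m M) (frobeniusVec D) := by
  rw [Smap, frobeniusVec_smul, radialMap, ← mnorm_eq_norm, Sprofile]

theorem Smap_monotone_general (a m M : ℝ) (ha : 0 < a)
    (D₁ D₂ : Matrix (Fin 3) (Fin 3) ℝ)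
    (h₁ : mnorm D₁ < M) (h₂ : mnorm D₂ < M) :
    0 ≤ mdot (Smap a m M D₁ - Smap a m M D₂) (D₁ - D₂) := by
  rw [mdot_eq_inner, frobeniusVec_sub, frobeniusVec_sub, frobeniusVec_Smap, frobeniusVec_Smap]
  rw [mnorm_eq_norm] at h₁ h₂
  exact inner_radialMap_sub_radialMap_nonneg (fun _ ht => ht.1) (Sprofile_monotoneOn ha m M)
    (fun _ => Sprofile_nonneg ha m) ⟨norm_nonneg _, h₁⟩ ⟨norm_nonneg _, h₂⟩

/-- Monotonicity of the constitutive map `S` on `{D ∈ Sym3 : |D| < M}`. -/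
theorem Smap_monotone (a m M : ℝ) (ha : 0 < a) (hm : 0 < m) (hmM : m < M)
    (D₁ D₂ : Matrix (Fin 3) (Fin 3) ℝ) (hs₁ : D₁.IsSymm) (hs₂ : D₂.IsSymm)
    (h₁ : mnorm D₁ < M) (h₂ : mnorm D₂ < M) :
    0 ≤ mdot (Smap a m M D₁ - Smap a m M D₂) (D₁ - D₂) :=
  Smap_monotone_general a m M ha D₁ D₂ h₁ h₂
end
end

section
/- Let a > 0 and 0 < m < M < ∞. For every D ∈ Sym3 with (M+m)/2 ≤ |D| < M, one has ((M−m)/2)^{1+a} (1 + |S(D)|^a)^{−(1+1/a)} ≤ (M^a − |D|^a)^{1+1/a} ≤ M^{1+a} (1 + |S(D)|^a)^{−(1+1/a)}. -/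
noncomputable section

lemma mnorm_smul (c : ℝ) (D : Matrix (Fin 3) (Fin 3) ℝ) :
    mnorm (c • D) = |c| * mnorm D := by
  unfold mnorm mdot
  have : ∑ i, ∑ j, (c • D) i j * (c • D) i j = c ^ 2 * ∑ i, ∑ j, D i j * D i j := by
    rw [Finset.mul_sum]
    refine Finset.sum_congr rfl fun i _ => ?_
    rw [Finset.mul_sum]
    refine Finset.sum_congr rfl fun j _ => ?_
    simp [Matrix.smul_apply, smul_eq_mul]; ring
  rw [this, Real.sqrt_mul (sq_nonneg c), Real.sqrt_sq_eq_abs]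

/-- For `(M+m)/2 ≤ |D| < M`:
`((M−m)/2)^{1+a} (1 + |S(D)|^a)^{−(1+1/a)} ≤ (M^a − |D|^a)^{1+1/a}
  ≤ M^{1+a} (1 + |S(D)|^a)^{−(1+1/a)}`. -/
theorem Smap_pow_bounds (a m M : ℝ) (ha : 0 < a) (hm : 0 < m) (hmM : m < M)
    (D : Matrix (Fin 3) (Fin 3) ℝ) (hD : D.IsSymm)
    (h₁ : (M + m)/2 ≤ mnorm D) (h₂ : mnorm D < M) :
    ((M - m)/2) ^ (1 + a) * (1 + mnorm (Smap a m M D) ^ a) ^ (-(1 + 1/a)) ≤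
      (M ^ a - mnorm D ^ a) ^ (1 + 1/a) ∧
    (M ^ a - mnorm D ^ a) ^ (1 + 1/a) ≤
      M ^ (1 + a) * (1 + mnorm (Smap a m M D) ^ a) ^ (-(1 + 1/a)) := by
  have ha' : a ≠ 0 := ha.ne'
  have hM0 : 0 < M := hm.trans hmM
  have hd0 : 0 < mnorm D := lt_of_lt_of_le (by linarith) h₁
  have hdm : m < mnorm D := lt_of_lt_of_le (by linarith) h₁
  have ht : 0 < M ^ a - mnorm D ^ a := by
    have h := Real.rpow_lt_rpow hd0.le h₂ ha
    linarith
  set d := mnorm D with hdd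
  set t := M ^ a - d ^ a with htt
  set s := (d - m) ^ a with hss
  have hs : 0 < s := Real.rpow_pos_of_pos (by linarith) a
  have hSm : mnorm (Smap a m M D) = (d - m) * t ^ (-1/a) := by
    rw [Smap, mnorm_smul, ← hdd, ← htt,
        max_eq_left (by linarith : (0:ℝ) ≤ d - m),
        abs_of_nonneg (div_nonneg (mul_nonneg (by linarith) (Real.rpow_nonneg ht.le _)) hd0.le), div_mul_cancel₀ _ hd0.ne']
  have hSa : mnorm (Smap a m M D) ^ a = s / t := by
    rw [hSm, Real.mul_rpow (by linarith) (Real.rpow_nonneg ht.le _),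
        ← Real.rpow_mul ht.le, show -1/a * a = -1 by field_simp,
        Real.rpow_neg_one, hss, div_eq_mul_inv]
  have h1S : 1 + mnorm (Smap a m M D) ^ a = (t + s) / t := by
    rw [hSa]; field_simp
  have hts : 0 < t + s := by linarith
  have hp : 0 < 1 + 1/a := by positivity
  have key : (1 + mnorm (Smap a m M D) ^ a) ^ (-(1 + 1/a))
      = t ^ (1 + 1/a) / (t + s) ^ (1 + 1/a) := by
    rw [h1S, Real.rpow_neg (by positivity), Real.div_rpow hts.le ht.le, inv_div]
  have htp : 0 < t ^ (1 + 1/a) := Real.rpow_pos_of_pos ht _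
  have htsp : 0 < (t + s) ^ (1 + 1/a) := Real.rpow_pos_of_pos hts _
  have hC : (0:ℝ) < (M - m)/2 := by linarith
  have hCa : ((M - m)/2) ^ a ≤ s := by
    rw [hss]
    exact Real.rpow_le_rpow hC.le (by linarith) ha.le
  have hsa : t + s ≤ M ^ a := by
    have : s ≤ d ^ a := Real.rpow_le_rpow (by linarith) (by linarith) ha.le
    linarith
  have hexp : ∀ x : ℝ, 0 ≤ x → x ^ (1 + a) = (x ^ a) ^ (1 + 1/a) := by
    intro x hx
    rw [← Real.rpow_mul hx, show a * (1 + 1/a) = 1 + a by field_simp; ring]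
  have hlow : ((M - m)/2) ^ (1 + a) ≤ (t + s) ^ (1 + 1/a) := by
    rw [hexp _ hC.le]
    exact Real.rpow_le_rpow (Real.rpow_nonneg hC.le _) (by linarith) hp.le
  have hup : (t + s) ^ (1 + 1/a) ≤ M ^ (1 + a) := by
    rw [hexp _ hM0.le]
    exact Real.rpow_le_rpow hts.le hsa hp.le
  constructor
  · rw [key]
    calc ((M - m)/2) ^ (1 + a) * (t ^ (1 + 1/a) / (t + s) ^ (1 + 1/a))
        ≤ (t + s) ^ (1 + 1/a) * (t ^ (1 + 1/a) / (t + s) ^ (1 + 1/a)) := by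
          exact mul_le_mul_of_nonneg_right hlow (by positivity)
      _ = t ^ (1 + 1/a) := by field_simp
  · rw [key]
    calc t ^ (1 + 1/a)
        = (t + s) ^ (1 + 1/a) * (t ^ (1 + 1/a) / (t + s) ^ (1 + 1/a)) := by field_simp
      _ ≤ M ^ (1 + a) * (t ^ (1 + 1/a) / (t + s) ^ (1 + 1/a)) := by
          exact mul_le_mul_of_nonneg_right hup (by positivity)
end
end

section
/- Let a > 0 and 0 < m < M < ∞, and let n ≥ n₀ ≥ 1 be integers with M − 1/n₀ > m. Then for every D ∈ Sym3 with m < |D| < M and every E ∈ Sym3, one has Q_n(D,E) ≥ Q_{n₀}(D,E). -/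
noncomputable section

/-- `c_n = M^a − (M−1/n)^a`. -/
def cn (a M : ℝ) (n : ℕ) : ℝ := M ^ a - (M - 1/(n:ℝ)) ^ a

/-- `Q(D,E) = (|D|−m)(M^a−|D|^a)^{−1/a}|E|²/|D|
      + ((|D|−m)|D|^a + m(M^a−|D|^a))(M^a−|D|^a)^{−1−1/a}|D|^{−3}(D·E)²`. -/
def Qmap (a m M : ℝ) (D E : Matrix (Fin 3) (Fin 3) ℝ) : ℝ :=
  (mnorm D - m) * (M ^ a - mnorm D ^ a) ^ (-1/a) * mnorm E ^ 2 / mnorm D +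
    ((mnorm D - m) * mnorm D ^ a + m * (M ^ a - mnorm D ^ a)) *
      (M ^ a - mnorm D ^ a) ^ (-1 - 1/a) * (mdot D E) ^ 2 / mnorm D ^ 3

/-- `Q_n(D,E) = Q(D,E)` if `|D| < M−1/n`, and
`Q_n(D,E) = c_n^{−1/a}((|D|−m)|E|²/|D| + m(D·E)²/|D|³)` if `|D| ≥ M−1/n`. -/
def Qn (a m M : ℝ) (n : ℕ) (D E : Matrix (Fin 3) (Fin 3) ℝ) : ℝ :=
  if mnorm D < M - 1/(n:ℝ) then Qmap a m M D E
  else cn a M n ^ (-1/a) *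
    ((mnorm D - m) * mnorm E ^ 2 / mnorm D + m * (mdot D E) ^ 2 / mnorm D ^ 3)

/-- For integers `n ≥ n₀ ≥ 1` with `M − 1/n₀ > m` and `m < |D| < M`:
`Q_n(D,E) ≥ Q_{n₀}(D,E)`. -/
theorem Qn_mono (a m M : ℝ) (ha : 0 < a) (hm : 0 < m) (hmM : m < M)
    (n₀ n : ℕ) (hn₀ : 1 ≤ n₀) (hnn : n₀ ≤ n) (hmn₀ : m < M - 1/(n₀:ℝ))
    (D E : Matrix (Fin 3) (Fin 3) ℝ) (hD : D.IsSymm) (hE : E.IsSymm)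
    (h₁ : m < mnorm D) (h₂ : mnorm D < M) :
    Qn a m M n₀ D E ≤ Qn a m M n D E := by
  have hn₀pos : (0:ℝ) < (n₀:ℝ) := by exact_mod_cast hn₀
  have hnpos : (0:ℝ) < (n:ℝ) := lt_of_lt_of_le hn₀pos (by exact_mod_cast hnn)
  have hstep : M - 1/(n₀:ℝ) ≤ M - 1/(n:ℝ) := by
    have : 1/(n:ℝ) ≤ 1/(n₀:ℝ) :=
      one_div_le_one_div_of_le hn₀pos (by exact_mod_cast hnn)
    linarith
  have hND : 0 < mnorm D := lt_trans hm h₁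
  have hneg : (-1:ℝ)/a ≤ 0 := by
    rw [neg_div]
    have : (0:ℝ) < 1/a := by positivity
    linarith
  have hX : (0:ℝ) ≤ mnorm D - m := by linarith
  have hc₀pos : 0 < cn a M n₀ := by
    have hb : (0:ℝ) < M - 1/(n₀:ℝ) := lt_trans hm hmn₀
    have h1n : (0:ℝ) < 1/(n₀:ℝ) := by positivity
    have : (M - 1/(n₀:ℝ)) ^ a < M ^ a :=
      Real.rpow_lt_rpow hb.le (by linarith) ha
    unfold cn; linarith
  unfold Qn
  by_cases h0 : mnorm D < M - 1/(n₀:ℝ)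
  · have hn' : mnorm D < M - 1/(n:ℝ) := lt_of_lt_of_le h0 hstep
    rw [if_pos h0, if_pos hn']
  · rw [if_neg h0]
    push_neg at h0
    have ht : 0 < M ^ a - mnorm D ^ a := by
      have : mnorm D ^ a < M ^ a := Real.rpow_lt_rpow hND.le h₂ ha
      linarith
    by_cases h1' : mnorm D < M - 1/(n:ℝ)
    · -- case 2 : cap formula ≤ Qmap
      rw [if_pos h1']
      set t := M ^ a - mnorm D ^ a with htdef
      have htc : t ≤ cn a M n₀ := by
        have hb : (0:ℝ) < M - 1/(n₀:ℝ) := lt_trans hm hmn₀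
        have : (M - 1/(n₀:ℝ)) ^ a ≤ mnorm D ^ a :=
          Real.rpow_le_rpow hb.le h0 ha.le
        unfold cn; rw [htdef]; linarith
      have he : cn a M n₀ ^ ((-1:ℝ)/a) ≤ t ^ ((-1:ℝ)/a) :=
        Real.rpow_le_rpow_of_nonpos ht htc hneg
      have he1 : 0 ≤ cn a M n₀ ^ ((-1:ℝ)/a) := (Real.rpow_pos_of_pos hc₀pos _).le
      have hsplit : t ^ ((-1:ℝ)/a) = t * t ^ ((-1:ℝ) - 1/a) := by
        have harith : (-1:ℝ)/a = 1 + (-1 - 1/a) := by ring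
        rw [harith, Real.rpow_add ht, Real.rpow_one]
      have hK : m * cn a M n₀ ^ ((-1:ℝ)/a) ≤
          ((mnorm D - m) * mnorm D ^ a + m * t) * t ^ ((-1:ℝ) - 1/a) := by
        have h2 : m * cn a M n₀ ^ ((-1:ℝ)/a) ≤ m * t ^ ((-1:ℝ)/a) :=
          mul_le_mul_of_nonneg_left he hm.le
        have hpow : 0 ≤ t ^ ((-1:ℝ) - 1/a) := (Real.rpow_pos_of_pos ht _).le
        have hNa : 0 ≤ mnorm D ^ a := Real.rpow_nonneg hND.le a
        nlinarith [mul_nonneg (mul_nonneg hX hNa) hpow]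
      have t1 : cn a M n₀ ^ ((-1:ℝ)/a) * ((mnorm D - m) * mnorm E ^ 2 / mnorm D)
          ≤ (mnorm D - m) * t ^ ((-1:ℝ)/a) * mnorm E ^ 2 / mnorm D := by
        rw [← mul_div_assoc, div_le_div_iff₀ hND hND]
        have hEE : (0:ℝ) ≤ mnorm E ^ 2 := sq_nonneg _
        nlinarith [mul_le_mul_of_nonneg_right he
          (mul_nonneg (mul_nonneg hX hEE) hND.le)]
      have t2 : cn a M n₀ ^ ((-1:ℝ)/a) * (m * (mdot D E) ^ 2 / mnorm D ^ 3)
          ≤ ((mnorm D - m) * mnorm D ^ a + m * t) * t ^ ((-1:ℝ) - 1/a)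
              * (mdot D E) ^ 2 / mnorm D ^ 3 := by
        have hN3 : (0:ℝ) < mnorm D ^ 3 := by positivity
        rw [← mul_div_assoc, div_le_div_iff₀ hN3 hN3]
        have hS : (0:ℝ) ≤ (mdot D E) ^ 2 := sq_nonneg _
        nlinarith [mul_le_mul_of_nonneg_right hK (mul_nonneg hS hN3.le)]
      unfold Qmap
      rw [htdef] at *
      calc cn a M n₀ ^ ((-1:ℝ)/a) *
            ((mnorm D - m) * mnorm E ^ 2 / mnorm D + m * (mdot D E) ^ 2 / mnorm D ^ 3)
          = cn a M n₀ ^ ((-1:ℝ)/a) * ((mnorm D - m) * mnorm E ^ 2 / mnorm D)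
            + cn a M n₀ ^ ((-1:ℝ)/a) * (m * (mdot D E) ^ 2 / mnorm D ^ 3) := by ring
        _ ≤ _ := add_le_add t1 t2
    · -- case 3 : both cap formulas
      rw [if_neg h1']
      push_neg at h1'
      have hcn : 0 < cn a M n := by
        have hb : (0:ℝ) < M - 1/(n:ℝ) := by
          have := lt_trans hm hmn₀; linarith
        have h1n : (0:ℝ) < 1/(n:ℝ) := by positivity
        have : (M - 1/(n:ℝ)) ^ a < M ^ a :=
          Real.rpow_lt_rpow hb.le (by linarith) ha
        unfold cn; linarith
      have hle : cn a M n ≤ cn a M n₀ := by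
        have hb : (0:ℝ) < M - 1/(n₀:ℝ) := lt_trans hm hmn₀
        have : (M - 1/(n₀:ℝ)) ^ a ≤ (M - 1/(n:ℝ)) ^ a :=
          Real.rpow_le_rpow hb.le hstep ha.le
        unfold cn; linarith
      have he : cn a M n₀ ^ ((-1:ℝ)/a) ≤ cn a M n ^ ((-1:ℝ)/a) :=
        Real.rpow_le_rpow_of_nonpos hcn hle hneg
      have hB : 0 ≤ (mnorm D - m) * mnorm E ^ 2 / mnorm D
          + m * (mdot D E) ^ 2 / mnorm D ^ 3 := by
        have h1 : 0 ≤ (mnorm D - m) * mnorm E ^ 2 / mnorm D :=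
          div_nonneg (mul_nonneg hX (sq_nonneg _)) hND.le
        have h2 : 0 ≤ m * (mdot D E) ^ 2 / mnorm D ^ 3 := by positivity
        linarith
      exact mul_le_mul_of_nonneg_right he hB
end
end
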